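/- Let t ≥ 2 and let G be the graph obtained from the complete bipartite graph K_{2⌊t/2⌋, 2⌊t/2⌋−1} by deleting the four edges of an induced 4-cycle C₄. Then Tr₂(G) = ⌊t/2⌋ + 1. -/

import Mathlib

open SimpleGraph

def TwoTransPart {V : Type*} (G : SimpleGraph V) (k : ℕ) (P : Fin k → Set V) : Prop :=
  (∀ i, (P i).Nonempty) ∧ (∀ v, ∃! i, v ∈ P i) ∧
    ∀ i j : Fin k, i < j → ∀ v ∈ P j,
      ∃ u w, u ∈ P i ∧ w ∈ P i ∧ u ≠ w ∧ G.Adj u v ∧ G.Adj w v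

/-- The 2-transitivity `Tr₂(G)`: the maximum size of a 2-transitive partition of `G`. -/
noncomputable def tr2 {V : Type*} (G : SimpleGraph V) : ℕ :=
  sSup {k | ∃ P : Fin k → Set V, TwoTransPart G k P}

/-!
A vertex in class `j` of a 2-transitive partition has two neighbours in each earlier class, so its
degree is at least `2j`; as every degree of `K_{2n,2n-1} \ C₄` is at most `2n`, at most `n + 1`
classes fit. Conversely, label each side by `0, 1, 2, …` so that the vertices of the 4-cycle get
labels `0` and `1`, and put labels `2i` and `2i + 1` of either side into class `i`. Outside class
`0` every vertex is adjacent to the whole other side, and the last vertex of the odd side, which is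
not on the 4-cycle, can be lifted to a class `n` of its own.
-/

section Partition

variable {V : Type*} {G : SimpleGraph V} {k : ℕ} {P : Fin k → Set V}

theorem TwoTransPart.eq_of_mem (hP : TwoTransPart G k P) {v : V} {i j : Fin k} (hi : v ∈ P i)
    (hj : v ∈ P j) : i = j :=
  (hP.2.1 v).unique hi hj

theorem TwoTransPart.two_mul_le_degree (hP : TwoTransPart G k P) {v : V}
    [Fintype (G.neighborSet v)] {j : Fin k} (hv : v ∈ P j) : 2 * j ≤ G.degree v := by
  have hnbrs : ∀ i : Fin j, ∃ u w, u ∈ P (i.castLT (i.2.trans j.2)) ∧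
      w ∈ P (i.castLT (i.2.trans j.2)) ∧ u ≠ w ∧ G.Adj u v ∧ G.Adj w v :=
    fun i => hP.2.2 _ j i.2 v hv
  choose u w hu hw huw hadju hadjw using hnbrs
  let f : Fin j × Bool → G.neighborSet v := fun p =>
    bif p.2 then ⟨u p.1, (hadju p.1).symm⟩ else ⟨w p.1, (hadjw p.1).symm⟩
  have hf : ∀ p, (f p : V) ∈ P (p.1.castLT (p.1.2.trans j.2)) := by
    rintro ⟨i, _ | _⟩
    exacts [hw i, hu i]
  have hinj : Function.Injective f := by
    rintro ⟨i, b⟩ ⟨i', b'⟩ hff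
    obtain rfl : i = i' := by
      have := hP.eq_of_mem (hf (i, b)) (congrArg Subtype.val hff ▸ hf (i', b'))
      simpa [Fin.ext_iff] using this
    cases b <;> cases b' <;> simp_all [f, Subtype.ext_iff, eq_comm]
  have hcard := Fintype.card_le_of_injective f hinj
  rwa [Fintype.card_prod, Fintype.card_fin, Fintype.card_bool, card_neighborSet_eq_degree,
    mul_comm] at hcard

theorem TwoTransPart.two_mul_pred_le_maxDegree [Fintype V] [DecidableRel G.Adj]
    (hP : TwoTransPart G k P) : 2 * (k - 1) ≤ G.maxDegree := by
  rcases Nat.eq_zero_or_pos k with rfl | hk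
  · simp
  obtain ⟨v, hv⟩ := hP.1 ⟨k - 1, by omega⟩
  exact (hP.two_mul_le_degree hv).trans (G.degree_le_maxDegree v)

theorem twoTransPart_preimage_singleton (φ : V → Fin k) (hφ : Function.Surjective φ)
    (hadj : ∀ v, ∀ i < φ v, ∃ u w, φ u = i ∧ φ w = i ∧ u ≠ w ∧ G.Adj u v ∧ G.Adj w v) :
    TwoTransPart G k (fun i => φ ⁻¹' {i}) := by
  refine ⟨fun i => hφ i, fun v => ⟨φ v, rfl, fun i hi => hi.symm⟩, ?_⟩
  rintro i j hij v rfl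
  exact hadj v i hij

end Partition

namespace SimpleGraph

variable {α β : Type*}

theorem degree_le_max_card_of_le_completeBipartiteGraph [Fintype α] [Fintype β]
    {G : SimpleGraph (α ⊕ β)} [DecidableRel G.Adj] (hG : G ≤ completeBipartiteGraph α β)
    (v : α ⊕ β) : G.degree v ≤ max (Fintype.card α) (Fintype.card β) := by
  rw [← card_neighborFinset_eq_degree]
  rcases v with a | b
  · calc (G.neighborFinset (.inl a)).card ≤ (Finset.univ.map .inr).card := by
          refine Finset.card_le_card fun w hw => ?_
          rcases w with a' | b
          · simpa using hG ((mem_neighborFinset _ _ _).1 hw)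
          · simp
      _ ≤ _ := by simp
  · calc (G.neighborFinset (.inr b)).card ≤ (Finset.univ.map .inl).card := by
          refine Finset.card_le_card fun w hw => ?_
          rcases w with a | b'
          · simp
          · simpa using hG ((mem_neighborFinset _ _ _).1 hw)
      _ ≤ _ := by simp

def completeBipartiteDeleteC4 (x₀ x₁ : α) (y₀ y₁ : β) : SimpleGraph (α ⊕ β) :=
  completeBipartiteGraph α β \ fromEdgeSet
    {s(.inl x₀, .inr y₀), s(.inl x₀, .inr y₁), s(.inl x₁, .inr y₀), s(.inl x₁, .inr y₁)}

variable {x₀ x₁ : α} {y₀ y₁ : β}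

theorem completeBipartiteDeleteC4_le :
    completeBipartiteDeleteC4 x₀ x₁ y₀ y₁ ≤ completeBipartiteGraph α β :=
  sdiff_le

theorem completeBipartiteDeleteC4_adj_of_ne_left {a : α} (ha₀ : a ≠ x₀) (ha₁ : a ≠ x₁) (b : β) :
    (completeBipartiteDeleteC4 x₀ x₁ y₀ y₁).Adj (.inl a) (.inr b) := by
  simp [completeBipartiteDeleteC4, ha₀, ha₁]

theorem completeBipartiteDeleteC4_adj_of_ne_right (a : α) {b : β} (hb₀ : b ≠ y₀) (hb₁ : b ≠ y₁) :
    (completeBipartiteDeleteC4 x₀ x₁ y₀ y₁).Adj (.inl a) (.inr b) := by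
  simp [completeBipartiteDeleteC4, hb₀, hb₁]

end SimpleGraph

theorem exists_equiv_fin_val_lt_two {α : Type*} {m : ℕ} (e₀ : α ≃ Fin m) {a a' : α}
    (h : a ≠ a') : ∃ e : α ≃ Fin m, (e a : ℕ) < 2 ∧ (e a' : ℕ) < 2 := by
  have hm : 2 ≤ m := by
    have := Fin.val_ne_of_ne (e₀.injective.ne h)
    have := (e₀ a).isLt
    have := (e₀ a').isLt
    omega
  let p₀ : Fin m := ⟨0, by omega⟩
  let p₁ : Fin m := ⟨1, by omega⟩
  let e₁ := e₀.trans (Equiv.swap (e₀ a) p₀)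
  have he₁a : e₁ a = p₀ := Equiv.swap_apply_left _ _
  have he₁a' : e₁ a' ≠ p₀ := he₁a ▸ e₁.injective.ne h.symm
  refine ⟨e₁.trans (Equiv.swap (e₁ a') p₁), ?_, ?_⟩
  · rw [Equiv.trans_apply, he₁a, Equiv.swap_apply_of_ne_of_ne he₁a'.symm (by simp [p₀, p₁])]
    simp [p₀]
  · simp [p₁]

section PairClass

variable {α β : Type*} {n : ℕ}

def pairClass (e : α ≃ Fin (2 * n)) (e' : β ≃ Fin (2 * n - 1)) : α ⊕ β → Fin (n + 1) :=
  Sum.elim (fun x => ⟨e x / 2, by have := (e x).isLt; omega⟩)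
    (fun y => if (e' y : ℕ) = 2 * n - 2 then Fin.last n
      else ⟨e' y / 2, by have := (e' y).isLt; omega⟩)

variable (e : α ≃ Fin (2 * n)) (e' : β ≃ Fin (2 * n - 1))

theorem pairClass_inl (x : α) : (pairClass e e' (.inl x) : ℕ) = e x / 2 := rfl

theorem pairClass_inr_of_ne {y : β} (hy : (e' y : ℕ) ≠ 2 * n - 2) :
    (pairClass e e' (.inr y) : ℕ) = e' y / 2 := by
  simp [pairClass, hy]

theorem pairClass_surjective (hn : 0 < n) : Function.Surjective (pairClass e e') := by
  intro i
  rcases i.le_last.lt_or_eq with hi | rfl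
  · refine ⟨.inl (e.symm ⟨2 * i, by rw [Fin.lt_def, Fin.val_last] at hi; omega⟩), Fin.ext ?_⟩
    simp [pairClass_inl]
  · refine ⟨.inr (e'.symm ⟨2 * n - 2, by omega⟩), ?_⟩
    simp [pairClass]

variable {x₀ x₁ : α} {y₀ y₁ : β}

theorem pairClass_exists_adj (hn : 2 ≤ n) (hx₀ : (e x₀ : ℕ) < 2) (hx₁ : (e x₁ : ℕ) < 2)
    (hy₀ : (e' y₀ : ℕ) < 2) (hy₁ : (e' y₁ : ℕ) < 2) (v : α ⊕ β) (i : Fin (n + 1))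
    (hi : i < pairClass e e' v) :
    ∃ u w, pairClass e e' u = i ∧ pairClass e e' w = i ∧ u ≠ w ∧
      (completeBipartiteDeleteC4 x₀ x₁ y₀ y₁).Adj u v ∧
      (completeBipartiteDeleteC4 x₀ x₁ y₀ y₁).Adj w v := by
  rw [Fin.lt_def] at hi
  rcases v with x | y
  · rw [pairClass_inl] at hi
    have hx : x ≠ x₀ ∧ x ≠ x₁ := by constructor <;> rintro rfl <;> omega
    have := (e x).isLt
    refine ⟨.inr (e'.symm ⟨2 * i, by omega⟩), .inr (e'.symm ⟨2 * i + 1, by omega⟩),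
      Fin.ext ?_, Fin.ext ?_, by simp,
      (completeBipartiteDeleteC4_adj_of_ne_left hx.1 hx.2 _).symm,
      (completeBipartiteDeleteC4_adj_of_ne_left hx.1 hx.2 _).symm⟩
    all_goals
      rw [pairClass_inr_of_ne _ _ (by simp only [e'.apply_symm_apply]; omega)]
      simp only [e'.apply_symm_apply]
      omega
  · have hy : y ≠ y₀ ∧ y ≠ y₁ := by
      constructor <;> rintro rfl <;> rw [pairClass_inr_of_ne _ _ (by omega)] at hi <;> omega
    have := (pairClass e e' (.inr y)).isLt
    refine ⟨.inl (e.symm ⟨2 * i, by omega⟩), .inl (e.symm ⟨2 * i + 1, by omega⟩),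
      Fin.ext ?_, Fin.ext ?_, by simp,
      completeBipartiteDeleteC4_adj_of_ne_right _ hy.1 hy.2,
      completeBipartiteDeleteC4_adj_of_ne_right _ hy.1 hy.2⟩
    all_goals
      simp only [pairClass_inl, e.apply_symm_apply]
      omega

theorem twoTransPart_pairClass (hn : 2 ≤ n) (hx₀ : (e x₀ : ℕ) < 2) (hx₁ : (e x₁ : ℕ) < 2)
    (hy₀ : (e' y₀ : ℕ) < 2) (hy₁ : (e' y₁ : ℕ) < 2) :
    TwoTransPart (completeBipartiteDeleteC4 x₀ x₁ y₀ y₁) (n + 1)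
      (fun i => pairClass e e' ⁻¹' {i}) :=
  twoTransPart_preimage_singleton _ (pairClass_surjective e e' (by omega))
    (pairClass_exists_adj e e' hn hx₀ hx₁ hy₀ hy₁)

end PairClass

theorem stmt18_general (t : ℕ)
    (x0 x1 : Fin (2 * (t / 2))) (y0 y1 : Fin (2 * (t / 2) - 1))
    (hx : x0 ≠ x1) (hy : y0 ≠ y1) :
    tr2 ((completeBipartiteGraph (Fin (2 * (t / 2))) (Fin (2 * (t / 2) - 1))) \
        SimpleGraph.fromEdgeSet
          {s(Sum.inl x0, Sum.inr y0), s(Sum.inl x0, Sum.inr y1),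
            s(Sum.inl x1, Sum.inr y0), s(Sum.inl x1, Sum.inr y1)}) = t / 2 + 1 := by
  classical
  change tr2 (completeBipartiteDeleteC4 x0 x1 y0 y1) = t / 2 + 1
  have hn : 2 ≤ t / 2 := by
    have := Fin.val_ne_of_ne hy
    have := y0.isLt
    have := y1.isLt
    omega
  obtain ⟨e, hx₀, hx₁⟩ := exists_equiv_fin_val_lt_two (Equiv.refl _) hx
  obtain ⟨e', hy₀, hy₁⟩ := exists_equiv_fin_val_lt_two (Equiv.refl _) hy
  refine IsGreatest.csSup_eq ⟨⟨_, twoTransPart_pairClass e e' hn hx₀ hx₁ hy₀ hy₁⟩, ?_⟩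
  rintro k ⟨P, hP⟩
  have hΔ := (completeBipartiteDeleteC4 x0 x1 y0 y1).maxDegree_le_of_forall_degree_le _
    (degree_le_max_card_of_le_completeBipartiteGraph completeBipartiteDeleteC4_le)
  have hk := hP.two_mul_pred_le_maxDegree.trans hΔ
  simp only [Fintype.card_fin] at hk
  omega

theorem stmt18 (t : ℕ) (ht : 2 ≤ t)
    (x0 x1 : Fin (2 * (t / 2))) (y0 y1 : Fin (2 * (t / 2) - 1))
    (hx : x0 ≠ x1) (hy : y0 ≠ y1) :
    tr2 ((completeBipartiteGraph (Fin (2 * (t / 2))) (Fin (2 * (t / 2) - 1))) \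
        SimpleGraph.fromEdgeSet
          {s(Sum.inl x0, Sum.inr y0), s(Sum.inl x0, Sum.inr y1),
            s(Sum.inl x1, Sum.inr y0), s(Sum.inl x1, Sum.inr y1)}) = t / 2 + 1 :=
  stmt18_general t x0 x1 y0 y1 hx hy
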